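/- arXiv:2403.02650 — 5 statements merged into one kernel-verified Lean document; each statement's English description precedes it below -/
import Mathlib

section
/- Let A₀ be a symmetric n×n real matrix and consider the block matrix A = [[A₀, b J_{1,m} ⊗ I_n],[b J_{m,1} ⊗ I_n, A₁ ⊗ I_n]], where A₁ is a symmetric m×m real matrix whose row sums all equal ρ and b is a real number. If x is an eigenvector of A₀ with eigenvalue λ₀ and λ satisfies λ² − (λ₀ + ρ)λ + (λ₀ρ − m b²) = 0 with λ ≠ ρ, then the vector (x, (b/(λ − ρ)) · (J_{m,1} ⊗ x)) is an eigenvector of A with eigenvalue λ. -/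
open Matrix Kronecker BigOperators

/-- The adjacency matrix of the corona product: blocks
`[[A₀, b·J_{1,m} ⊗ I_n],[b·J_{m,1} ⊗ I_n, A₁ ⊗ I_n]]`. -/
noncomputable def coronaA (n m : ℕ) (A0 : Matrix (Fin n) (Fin n) ℝ)
    (A1 : Matrix (Fin m) (Fin m) ℝ) (b : ℝ) :
    Matrix (Fin n ⊕ Fin m × Fin n) (Fin n ⊕ Fin m × Fin n) ℝ :=
  Matrix.fromBlocks A0
    (Matrix.of fun i p => if p.2 = i then b else 0)
    (Matrix.of fun p i => if p.2 = i then b else 0)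
    (A1 ⊗ₖ (1 : Matrix (Fin n) (Fin n) ℝ))

/-! Write the vector as `(x, y ⊗ x)` with `y` the constant vector `c = b / (λ - ρ)`. On such
vectors the corona matrix acts through `A₀ x` and `A₁ y` alone. The second block becomes
`(b + cρ) x = λ c x` by the choice of `c`, and the first `(λ₀ + m b c) x`, which is `λ x` exactly
because `(λ - λ₀)(λ - ρ) = m b²` is the given quadratic. -/

section

variable {n m : ℕ} (A0 : Matrix (Fin n) (Fin n) ℝ) (A1 : Matrix (Fin m) (Fin m) ℝ) (b : ℝ)
  (x : Fin n → ℝ) (y : Fin m → ℝ)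

theorem coronaA_mulVec_inl (i : Fin n) :
    (coronaA n m A0 A1 b *ᵥ Sum.elim x fun p => y p.1 * x p.2) (Sum.inl i) =
      (A0 *ᵥ x) i + b * (∑ q, y q) * x i := by
  simp [coronaA, mulVec, dotProduct, Fintype.sum_prod_type, Finset.sum_mul, Finset.mul_sum,
    mul_assoc]

theorem coronaA_mulVec_inr (q : Fin m) (i : Fin n) :
    (coronaA n m A0 A1 b *ᵥ Sum.elim x fun p => y p.1 * x p.2) (Sum.inr (q, i)) =
      (b + (A1 *ᵥ y) q) * x i := by
  simp [coronaA, mulVec, dotProduct, Fintype.sum_prod_type, Finset.sum_mul, add_mul, one_apply,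
    mul_assoc]

end

theorem corona_eigenvector_general (n m : ℕ) (A0 : Matrix (Fin n) (Fin n) ℝ)
    (A1 : Matrix (Fin m) (Fin m) ℝ) (ρ b : ℝ)
    (hrow : A1.mulVec (fun _ => 1) = fun _ => ρ)
    (x : Fin n → ℝ) (lam0 : ℝ) (hx0 : A0.mulVec x = lam0 • x)
    (lam : ℝ) (hlam : lam ^ 2 - (lam0 + ρ) * lam + (lam0 * ρ - m * b ^ 2) = 0)
    (hne : lam ≠ ρ) :
    (coronaA n m A0 A1 b).mulVec (Sum.elim x fun p => (b / (lam - ρ)) * x p.2) =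
      lam • (Sum.elim x fun p => (b / (lam - ρ)) * x p.2) := by
  have hden : lam - ρ ≠ 0 := sub_ne_zero.mpr hne
  set c := b / (lam - ρ) with hc_def
  have hc : c * (lam - ρ) = b := div_mul_cancel₀ b hden
  have hA1c : A1 *ᵥ (fun _ => c) = fun _ => c * ρ := by
    have hconst : (fun _ : Fin m => c) = c • fun _ => 1 := by ext; simp
    rw [hconst, mulVec_smul, hrow]
    rfl
  have hfirst : lam0 + b * (m * c) = lam := by
    rw [hc_def]
    field_simp
    linear_combination -hlam
  ext (i | ⟨q, i⟩)
  · rw [coronaA_mulVec_inl A0 A1 b x (fun _ => c), hx0]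
    simp only [Pi.smul_apply, smul_eq_mul, Sum.elim_inl, Finset.sum_const, Finset.card_univ,
      Fintype.card_fin, nsmul_eq_mul, ← hfirst]
    ring
  · rw [coronaA_mulVec_inr A0 A1 b x (fun _ => c), hA1c, ← hc]
    simp only [Pi.smul_apply, smul_eq_mul, Sum.elim_inr]
    ring

theorem corona_eigenvector (n m : ℕ) (A0 : Matrix (Fin n) (Fin n) ℝ) (hA0 : A0.IsSymm)
    (A1 : Matrix (Fin m) (Fin m) ℝ) (hA1 : A1.IsSymm) (ρ b : ℝ)
    (hrow : A1.mulVec (fun _ => 1) = fun _ => ρ)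
    (x : Fin n → ℝ) (hx : x ≠ 0) (lam0 : ℝ) (hx0 : A0.mulVec x = lam0 • x)
    (lam : ℝ) (hlam : lam ^ 2 - (lam0 + ρ) * lam + (lam0 * ρ - m * b ^ 2) = 0)
    (hne : lam ≠ ρ) :
    (coronaA n m A0 A1 b).mulVec (Sum.elim x fun p => (b / (lam - ρ)) * x p.2) =
      lam • (Sum.elim x fun p => (b / (lam - ρ)) * x p.2) :=
  corona_eigenvector_general n m A0 A1 ρ b hrow x lam0 hx0 lam hlam hne
end

section
/- With A as in the corona block-matrix setup, if y is an eigenvector of A₁ with eigenvalue μ and y is orthogonal to the all-ones vector, then for each standard basis vector e_i ∈ ℝ^n, the vector (0_{n}, y ⊗ e_i) is an eigenvector of A with eigenvalue μ. In particular μ is an eigenvalue of A with multiplicity at least n. -/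
open Matrix Kronecker BigOperators

theorem corona_eigenvector_copies (n m : ℕ) (A0 : Matrix (Fin n) (Fin n) ℝ)
    (A1 : Matrix (Fin m) (Fin m) ℝ) (hA1 : A1.IsSymm) (b : ℝ)
    (y : Fin m → ℝ) (hy : y ≠ 0) (μ : ℝ) (hμ : A1.mulVec y = μ • y)
    (horth : ∑ j, y j = 0) (i : Fin n) :
    (coronaA n m A0 A1 b).mulVec
        (Sum.elim (0 : Fin n → ℝ) fun p => y p.1 * (if p.2 = i then 1 else 0)) =
      μ • (Sum.elim (0 : Fin n → ℝ) fun p => y p.1 * (if p.2 = i then 1 else 0)) := by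
  funext x
  cases x with
  | inl k =>
    simp only [coronaA, mulVec, dotProduct, Pi.smul_apply, Sum.elim_inl, Fintype.sum_sum_type,
      fromBlocks_apply₁₁, fromBlocks_apply₁₂, Matrix.of_apply, Pi.zero_apply, mul_zero,
      Finset.sum_const_zero, zero_add, smul_eq_mul]
    rw [Fintype.sum_prod_type]
    simp only [Sum.elim_inr]
    have : ∀ j : Fin m, ∑ l : Fin n, (if l = k then b else 0) * (y j * if l = i then 1 else 0)
        = (if i = k then b else 0) * y j := by
      intro j
      rw [Finset.sum_eq_single i]
      · rcases eq_or_ne i k with h|h <;> simp [h]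
      · intro l _ hl; simp [hl]
      · simp
    simp only [this, ← Finset.mul_sum, horth, mul_zero]
  | inr p =>
    obtain ⟨j, k⟩ := p
    simp only [coronaA, mulVec, dotProduct, Pi.smul_apply, Sum.elim_inr, Fintype.sum_sum_type,
      fromBlocks_apply₂₁, fromBlocks_apply₂₂, Matrix.of_apply, Pi.zero_apply, mul_zero,
      Finset.sum_const_zero, zero_add, smul_eq_mul, kroneckerMap_apply]
    rw [Fintype.sum_prod_type]
    have : ∀ j' : Fin m, ∑ l : Fin n, A1 j j' * (1 : Matrix (Fin n) (Fin n) ℝ) k l *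
        (y j' * if l = i then 1 else 0) = A1 j j' * y j' * (if k = i then 1 else 0) := by
      intro j'
      rw [Finset.sum_eq_single i]
      · rcases eq_or_ne k i with h | h <;> simp [Matrix.one_apply, h]
      · intro l _ hl; simp [hl]
      · simp
    rw [Finset.sum_congr rfl fun j' _ => this j']
    rw [← Finset.sum_mul]
    have hm := congrFun hμ j
    simp only [mulVec, dotProduct, Pi.smul_apply, smul_eq_mul] at hm
    rw [hm]
    have h0 : ∀ l : Fin n, Sum.elim (0 : Fin n → ℝ)
        (fun p : Fin m × Fin n => y p.1 * if p.2 = i then 1 else 0) (Sum.inl l) = 0 :=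
      fun l => rfl
    simp only [h0, mul_zero, Finset.sum_const_zero, zero_add]
    ring
end

section
/- Let A₀ ∈ ℝ^{n×n}, A₁ ∈ ℝ^{m×m} with A₁ − λI_m invertible, and b ∈ ℝ. Then the characteristic-type determinant of the corona block matrix satisfies det(A − λI) = det(A₁ − λI_m)^n · det(A₀ − (λ + b² χ_{A₁}(λ)) I_n), where χ_{A₁}(λ) = J_{1,m}(A₁ − λI_m)⁻¹ J_{m,1} and A = [[A₀, b J_{1,m} ⊗ I_n],[b J_{m,1} ⊗ I_n, A₁ ⊗ I_n]]. -/
/-! Subtracting `λ I` keeps the corona matrix in block form with lower-right block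
`(A₁ - λ I) ⊗ I_n`, which is invertible with inverse `(A₁ - λ I)⁻¹ ⊗ I_n`. Taking the Schur
complement of that block, the correction `B ((A₁ - λ I)⁻¹ ⊗ I_n) C` is `b² χ_{A₁}(λ) I_n`:
the off-diagonal blocks `b J ⊗ I_n` connect vertex `i` of `G₀` only to the `i`-th copy of `G₁`,
and there they add up all entries of the resolvent. -/

open Matrix Kronecker BigOperators

/-- The coronal of a matrix at `lam`: the sum of the entries of the resolvent
`(A − lam I)⁻¹`. -/
noncomputable def coronal (m : ℕ) (A : Matrix (Fin m) (Fin m) ℝ) (lam : ℝ) : ℝ :=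
  ∑ i, ∑ j, (A - lam • (1 : Matrix (Fin m) (Fin m) ℝ))⁻¹ i j

namespace Matrix

variable {R ι κ l o : Type*} [CommRing R]

theorem fromBlocks_sub_smul_one [DecidableEq l] [DecidableEq o]
    (A : Matrix l l R) (B : Matrix l o R) (C : Matrix o l R) (D : Matrix o o R) (c : R) :
    fromBlocks A B C D - c • 1 = fromBlocks (A - c • 1) B C (D - c • 1) := by
  ext (i | i) (j | j) <;> simp [one_apply]

theorem kronecker_one_sub_smul_one [DecidableEq ι] [DecidableEq κ] (N : Matrix ι ι R) (c : R) :
    N ⊗ₖ (1 : Matrix κ κ R) - c • 1 = (N - c • 1) ⊗ₖ (1 : Matrix κ κ R) := by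
  rw [sub_eq_add_neg, sub_eq_add_neg, add_kronecker, ← neg_smul, ← neg_smul, smul_kronecker,
    one_kronecker_one]

variable [Fintype ι] [Fintype κ] [DecidableEq κ]

theorem of_ite_snd_mul_kronecker_one_mul (b : R) (N : Matrix ι ι R) :
    (of fun i (p : ι × κ) => if p.2 = i then b else 0) * (N ⊗ₖ (1 : Matrix κ κ R)) *
        (of fun (p : ι × κ) j => if p.2 = j then b else 0) =
      (b ^ 2 * ∑ i, ∑ j, N i j) • 1 := by
  ext k k'
  simp only [mul_apply, of_apply, kroneckerMap_apply, one_apply, Fintype.sum_prod_type,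
    smul_apply, smul_eq_mul, mul_ite, mul_one, mul_zero, ite_mul, zero_mul,
    Finset.sum_ite_eq', Finset.mem_univ, if_true]
  obtain rfl | hne := eq_or_ne k k'
  · simp only [if_true, Finset.sum_mul, Finset.mul_sum]
    rw [Finset.sum_comm]
    exact Finset.sum_congr rfl fun i _ => Finset.sum_congr rfl fun j _ => by ring
  · simp [hne, hne.symm]

theorem det_fromBlocks_of_ite_snd_kronecker_one [DecidableEq ι] (A : Matrix κ κ R) (b : R)
    {N : Matrix ι ι R} (hN : IsUnit N.det) :
    (fromBlocks A (of fun i (p : ι × κ) => if p.2 = i then b else 0)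
        (of fun p j => if p.2 = j then b else 0) (N ⊗ₖ 1)).det =
      N.det ^ Fintype.card κ * (A - (b ^ 2 * ∑ i, ∑ j, N⁻¹ i j) • 1).det := by
  have : Invertible (N ⊗ₖ (1 : Matrix κ κ R)) :=
    invertibleOfIsUnitDet _ (by simpa [det_kronecker] using hN.pow (Fintype.card κ))
  rw [det_fromBlocks₂₂, invOf_eq_nonsing_inv, inv_kronecker, inv_one,
    of_ite_snd_mul_kronecker_one_mul, det_kronecker, det_one, one_pow, mul_one]

end Matrix

theorem corona_charpoly_via_coronal (n m : ℕ) (A0 : Matrix (Fin n) (Fin n) ℝ)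
    (A1 : Matrix (Fin m) (Fin m) ℝ) (b lam : ℝ)
    (hinv : IsUnit (A1 - lam • (1 : Matrix (Fin m) (Fin m) ℝ)).det) :
    (coronaA n m A0 A1 b - lam • 1).det =
      (A1 - lam • (1 : Matrix (Fin m) (Fin m) ℝ)).det ^ n *
        (A0 - (lam + b ^ 2 * coronal m A1 lam) • (1 : Matrix (Fin n) (Fin n) ℝ)).det := by
  rw [coronaA, fromBlocks_sub_smul_one, kronecker_one_sub_smul_one,
    det_fromBlocks_of_ite_snd_kronecker_one _ _ hinv, Fintype.card_fin, sub_sub, ← add_smul,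
    coronal]
end

section
/- Let S₀ ∈ ℝ^{n×n} be symmetric with constant row sum, S₁ ∈ ℝ^{m×m} symmetric with S₁·1 = σ·1, b ∈ ℝ, and let S = [[S₀, J_{1,m} ⊗ (J_n − 2bI_n)],[J_{m,1} ⊗ (J_n − 2bI_n), J_m ⊗ (J_n − I_n) + S₁ ⊗ I_n]]. If x ∈ ℝ^n satisfies S₀x = μ₀x and 1ᵀx = 0, and real numbers μ, t satisfy μ = μ₀ − 2tmb and μt = −2b + t(σ − m), then (x, t·(J_{m,1} ⊗ x)) is an eigenvector of S with eigenvalue μ. -/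
open Matrix Kronecker BigOperators

/-- The all-ones matrix. -/
noncomputable def Jmat (p q : ℕ) : Matrix (Fin p) (Fin q) ℝ := Matrix.of fun _ _ => 1

/-- The Seidel matrix of the corona product:
`[[S₀, J_{1,m} ⊗ (J_n − 2bI_n)],[J_{m,1} ⊗ (J_n − 2bI_n), J_m ⊗ (J_n − I_n) + S₁ ⊗ I_n]]`. -/
noncomputable def seidelCorona (n m : ℕ) (S0 : Matrix (Fin n) (Fin n) ℝ)
    (S1 : Matrix (Fin m) (Fin m) ℝ) (b : ℝ) :
    Matrix (Fin n ⊕ Fin m × Fin n) (Fin n ⊕ Fin m × Fin n) ℝ :=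
  Matrix.fromBlocks S0
    (Matrix.of fun i p => (1 : ℝ) - (if p.2 = i then 2 * b else 0))
    (Matrix.of fun p i => (1 : ℝ) - (if p.2 = i then 2 * b else 0))
    (Jmat m m ⊗ₖ (Jmat n n - 1) + S1 ⊗ₖ (1 : Matrix (Fin n) (Fin n) ℝ))

theorem seidel_corona_eigenvector (n m : ℕ) (S0 : Matrix (Fin n) (Fin n) ℝ)
    (hS0 : S0.IsSymm) (S1 : Matrix (Fin m) (Fin m) ℝ) (hS1 : S1.IsSymm) (σ b : ℝ)
    (hrow : S1.mulVec (fun _ => 1) = fun _ => σ)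
    (x : Fin n → ℝ) (hx : x ≠ 0) (μ0 : ℝ) (hx0 : S0.mulVec x = μ0 • x)
    (horth : ∑ i, x i = 0) (μ t : ℝ)
    (h1 : μ = μ0 - 2 * t * m * b) (h2 : μ * t = -2 * b + t * (σ - m)) :
    (seidelCorona n m S0 S1 b).mulVec (Sum.elim x fun p => t * x p.2) =
      μ • (Sum.elim x fun p => t * x p.2) := by
  have key : ∀ (c : ℝ) (i : Fin n),
      ∑ l, ((1 : ℝ) - (if l = i then 2 * b else 0)) * (c * x l) = -(2 * b * (c * x i)) := by
    intro c i
    have h : ∀ l, ((1 : ℝ) - (if l = i then 2 * b else 0)) * (c * x l)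
        = c * x l - (if l = i then 2 * b * (c * x l) else 0) := by
      intro l; by_cases h : l = i <;> simp [h] <;> ring
    simp [h, Finset.sum_sub_distrib, ← Finset.mul_sum, horth]
  have hrow' : ∀ j : Fin m, ∑ j', S1 j j' = σ := by
    intro j
    have := congrFun hrow j
    simpa [Matrix.mulVec, dotProduct] using this
  funext i
  cases i with
  | inl i =>
    have h0 : ∑ j, S0 i j * x j = μ0 * x i := by
      have := congrFun hx0 i
      simpa [Matrix.mulVec, dotProduct] using this
    simp only [seidelCorona, Matrix.mulVec, dotProduct, Sum.elim_inl, Sum.elim_inr,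
      Matrix.fromBlocks_apply₁₁, Matrix.fromBlocks_apply₁₂, Fintype.sum_sum_type,
      Fintype.sum_prod_type, Matrix.of_apply, Pi.smul_apply, smul_eq_mul]
    rw [h0]
    simp only [key t i, Finset.sum_const, Finset.card_univ, Fintype.card_fin, nsmul_eq_mul]
    rw [h1]; ring
  | inr p =>
    obtain ⟨j, l⟩ := p
    have hC' : ∑ i, ((1 : ℝ) - (if l = i then 2 * b else 0)) * x i = -(2 * b * x l) := by
      have h : ∀ i, ((1 : ℝ) - (if l = i then 2 * b else 0)) * x i
          = x i - (if i = l then 2 * b * x i else 0) := by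
        intro i
        rcases eq_or_ne i l with h | h
        · subst h; simp; ring
        · simp [h, h.symm]
      simp [h, Finset.sum_sub_distrib, horth]
    have hD : ∀ j' : Fin m, ∑ l' : Fin n,
        ((Jmat m m ⊗ₖ (Jmat n n - 1) + S1 ⊗ₖ (1 : Matrix (Fin n) (Fin n) ℝ) :
            Matrix (Fin m × Fin n) (Fin m × Fin n) ℝ) (j, l) (j', l'))
          * (t * x l') = -(t * x l) + S1 j j' * (t * x l) := by
      intro j'
      have h : ∀ l' : Fin n,
          ((Jmat m m ⊗ₖ (Jmat n n - 1) + S1 ⊗ₖ (1 : Matrix (Fin n) (Fin n) ℝ) :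
              Matrix (Fin m × Fin n) (Fin m × Fin n) ℝ) (j, l) (j', l'))
            * (t * x l')
          = t * x l' + (if l' = l then (-(t * x l') + S1 j j' * (t * x l')) else 0) := by
        intro l'
        rcases eq_or_ne l' l with h | h
        · subst h; simp [Jmat, Matrix.kroneckerMap_apply, Matrix.one_apply]
        · simp [Jmat, Matrix.kroneckerMap_apply, Matrix.one_apply, h, h.symm]
      rw [Finset.sum_congr rfl fun l' _ => h l']
      simp [Finset.sum_add_distrib, ← Finset.mul_sum, horth]
    simp only [seidelCorona, Matrix.mulVec, dotProduct, Sum.elim_inl, Sum.elim_inr,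
      Matrix.fromBlocks_apply₂₁, Matrix.fromBlocks_apply₂₂, Fintype.sum_sum_type,
      Fintype.sum_prod_type, Matrix.of_apply, Pi.smul_apply, smul_eq_mul]
    rw [hC']
    simp only [hD, Finset.sum_add_distrib, Finset.sum_const, Finset.card_univ,
      Fintype.card_fin, nsmul_eq_mul, ← Finset.sum_mul, hrow' j]
    have : μ * (t * x l) = (-2 * b + t * (σ - m)) * x l := by rw [← mul_assoc, h2]
    rw [this]; ring
end

section
/- Let A₀ ∈ ℝ^{n×n} be symmetric with eigenvalues λ₁ ≥ … ≥ λ_n, and A₁ ∈ ℝ^{m×m} symmetric with constant row sum ρ and eigenvalues ρ = μ₁ ≥ μ₂ ≥ … ≥ μ_m, b ∈ ℝ. Then the characteristic polynomial of the corona block matrix A = [[A₀, b J_{1,m} ⊗ I_n],[b J_{m,1} ⊗ I_n, A₁ ⊗ I_n]] equals ∏_{i=1}^{n} (λ² − (λᵢ + ρ)λ + λᵢρ − mb²) evaluated at λ, times ∏_{j=2}^{m} (μⱼ − λ)^n (up to sign). -/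
open Matrix Kronecker BigOperators Finset

/-!
For `λ` outside the spectrum of `A₁`, the lower right block `(A₁ - λ) ⊗ I` of `A - λ` is
invertible. Since `A₁ - λ` has constant row sum `ρ - λ`, its inverse has constant row sum
`(ρ - λ)⁻¹`, so the Schur complement of that block is the scalar shift
`A₀ - (λ + m b² / (ρ - λ)) I`, and clearing the denominator `ρ - λ` against the factor `μ₁ - λ`
of `det (A₁ - λ)` yields the quadratic factors. Both sides are continuous in `λ` and agree off
the finite spectrum of `A₁`, hence everywhere.
-/

def coronaLink {ι κ R : Type*} [DecidableEq ι] [Zero R] (b : R) : Matrix ι (κ × ι) R :=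
  of fun i p => if p.2 = i then b else 0

theorem coronaLink_mul_kronecker_one_mul_transpose {ι κ R : Type*} [Fintype ι] [Fintype κ]
    [DecidableEq ι] [CommRing R] (b : R) (D : Matrix κ κ R) :
    (coronaLink b : Matrix ι (κ × ι) R) * (D ⊗ₖ (1 : Matrix ι ι R)) *
        (coronaLink b : Matrix ι (κ × ι) R)ᵀ =
      (b ^ 2 * ∑ p, ∑ q, D p q) • (1 : Matrix ι ι R) := by
  ext i i'
  by_cases h : i = i'
  · subst h
    simp only [coronaLink, mul_apply, of_apply, kroneckerMap_apply, one_apply, mul_ite, mul_one,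
      mul_zero, ite_mul, zero_mul, Fintype.sum_prod_type, sum_ite_eq', mem_univ, ↓reduceIte,
      sum_ite_irrel, sum_const_zero, transpose_apply, Matrix.smul_apply, smul_eq_mul, sum_mul,
      mul_sum]
    rw [sum_comm]
    exact sum_congr rfl fun _ _ => sum_congr rfl fun _ _ => by ring
  · simp [coronaLink, mul_apply, one_apply, Fintype.sum_prod_type, h, Ne.symm h]

theorem Matrix.sum_sum_inv_of_mulVec_const {K ι : Type*} [Field K] [Fintype ι] [DecidableEq ι]
    {C : Matrix ι ι K} (hC : IsUnit C.det) {c : K} (hc : c ≠ 0)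
    (hrow : C *ᵥ (fun _ => 1) = fun _ => c) :
    ∑ p, ∑ q, C⁻¹ p q = Fintype.card ι / c := by
  have hinv : C⁻¹ *ᵥ (fun _ => c) = fun _ => 1 := by
    rw [← hrow, mulVec_mulVec, nonsing_inv_mul _ hC, one_mulVec]
  have hrowinv : ∀ p, ∑ q, C⁻¹ p q = 1 / c := fun p => by
    have := congrFun hinv p
    simp only [mulVec, dotProduct, ← Finset.sum_mul] at this
    field_simp
    exact this
  simp [hrowinv, div_eq_mul_inv]

theorem coronaA_eq_fromBlocks (n m : ℕ) (A0 : Matrix (Fin n) (Fin n) ℝ)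
    (A1 : Matrix (Fin m) (Fin m) ℝ) (b : ℝ) :
    coronaA n m A0 A1 b = fromBlocks A0 (coronaLink b) (coronaLink b)ᵀ (A1 ⊗ₖ 1) :=
  rfl

theorem coronaA_sub_smul_one (n m : ℕ) (A0 : Matrix (Fin n) (Fin n) ℝ)
    (A1 : Matrix (Fin m) (Fin m) ℝ) (b x : ℝ) :
    coronaA n m A0 A1 b - x • 1 = coronaA n m (A0 - x • 1) (A1 - x • 1) b := by
  ext (i | ⟨k, i⟩) (j | ⟨l, j⟩)
  · simp [coronaA, one_apply]
  · simp [coronaA, one_apply]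
  · simp [coronaA, one_apply]
  · by_cases hkl : k = l <;> by_cases hij : i = j <;> simp [coronaA, one_apply, hkl, hij]

theorem det_coronaA_of_mulVec_const (n m : ℕ) (A0 : Matrix (Fin n) (Fin n) ℝ)
    (A1 : Matrix (Fin m) (Fin m) ℝ) (b : ℝ) (hA1 : IsUnit A1.det) {c : ℝ} (hc : c ≠ 0)
    (hrow : A1 *ᵥ (fun _ => 1) = fun _ => c) :
    (coronaA n m A0 A1 b).det = A1.det ^ n * (A0 - (m * b ^ 2 / c) • 1).det := by
  have hdet : IsUnit (A1 ⊗ₖ (1 : Matrix (Fin n) (Fin n) ℝ)).det := by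
    simpa [det_kronecker] using hA1.pow n
  let _ := (A1 ⊗ₖ (1 : Matrix (Fin n) (Fin n) ℝ)).invertibleOfIsUnitDet hdet
  rw [coronaA_eq_fromBlocks, det_fromBlocks₂₂, invOf_eq_nonsing_inv, inv_kronecker, inv_one,
    coronaLink_mul_kronecker_one_mul_transpose, sum_sum_inv_of_mulVec_const hA1 hc hrow,
    det_kronecker, det_one, one_pow, mul_one, Fintype.card_fin, Fintype.card_fin,
    ← mul_div_assoc, mul_comm (b ^ 2)]

theorem dense_setOf_prod_sub_ne_zero {ι : Type*} [Fintype ι] (μ : ι → ℝ) :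
    Dense {x : ℝ | ∏ j, (μ j - x) ≠ 0} := by
  have hfin : {x : ℝ | ∏ j, (μ j - x) ≠ 0}ᶜ ⊆ Set.range μ := fun x hx => by
    obtain ⟨j, -, hj⟩ := prod_eq_zero_iff.mp (not_not.mp hx)
    exact ⟨j, sub_eq_zero.mp hj⟩
  simpa using ((Set.finite_range μ).subset hfin).countable.dense_compl ℝ

theorem pow_mul_prod_sub_add_div {n : ℕ} (ν : Fin n → ℝ) {ρ x : ℝ} (d : ℝ) (h : ρ - x ≠ 0) :
    (ρ - x) ^ n * ∏ i, (ν i - (x + d / (ρ - x))) =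
      ∏ i, (x ^ 2 - (ν i + ρ) * x + (ν i * ρ - d)) := by
  rw [← Fin.prod_const, ← prod_mul_distrib]
  refine prod_congr rfl fun i _ => ?_
  field_simp
  ring

theorem corona_char_poly_general (n m : ℕ) (hm : 1 ≤ m)
    (A0 : Matrix (Fin n) (Fin n) ℝ)
    (A1 : Matrix (Fin m) (Fin m) ℝ) (ρ b : ℝ)
    (hrow : A1.mulVec (fun _ => 1) = fun _ => ρ)
    (lamEig : Fin n → ℝ)
    (hA0char : ∀ x : ℝ, (A0 - x • (1 : Matrix (Fin n) (Fin n) ℝ)).det = ∏ i, (lamEig i - x))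
    (μ : Fin m → ℝ) (hμ0 : μ ⟨0, hm⟩ = ρ)
    (hA1char : ∀ x : ℝ, (A1 - x • (1 : Matrix (Fin m) (Fin m) ℝ)).det = ∏ j, (μ j - x)) :
    ∀ lam : ℝ,
      (coronaA n m A0 A1 b - lam • 1).det =
        (∏ i, (lam ^ 2 - (lamEig i + ρ) * lam + (lamEig i * ρ - m * b ^ 2))) *
          ∏ j ∈ Finset.univ.erase ⟨0, hm⟩, (μ j - lam) ^ n := by
  have generic : ∀ x ∈ {x : ℝ | ∏ j, (μ j - x) ≠ 0},
      (coronaA n m A0 A1 b - x • 1).det =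
        (∏ i, (x ^ 2 - (lamEig i + ρ) * x + (lamEig i * ρ - m * b ^ 2))) *
          ∏ j ∈ Finset.univ.erase ⟨0, hm⟩, (μ j - x) ^ n := by
    intro x hx
    have hρx : ρ - x ≠ 0 := hμ0 ▸ prod_ne_zero_iff.mp hx _ (mem_univ _)
    have hrowx : (A1 - x • 1) *ᵥ (fun _ => 1) = fun _ => ρ - x := by
      ext
      simp [sub_mulVec, hrow, smul_mulVec]
    rw [coronaA_sub_smul_one, det_coronaA_of_mulVec_const _ _ _ _ _
      (by rw [hA1char]; exact hx.isUnit) hρx hrowx, sub_sub, ← add_smul, hA0char, hA1char,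
      ← mul_prod_erase univ _ (mem_univ ⟨0, hm⟩), hμ0, mul_pow, mul_right_comm,
      pow_mul_prod_sub_add_div _ _ hρx, prod_pow]
  exact congrFun (Continuous.ext_on (dense_setOf_prod_sub_ne_zero μ) (by fun_prop)
    (by fun_prop) generic)

theorem corona_char_poly (n m : ℕ) (hm : 1 ≤ m)
    (A0 : Matrix (Fin n) (Fin n) ℝ) (hA0 : A0.IsSymm)
    (A1 : Matrix (Fin m) (Fin m) ℝ) (hA1 : A1.IsSymm) (ρ b : ℝ)
    (hrow : A1.mulVec (fun _ => 1) = fun _ => ρ)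
    (lamEig : Fin n → ℝ) (hlam : ∀ i j, i ≤ j → lamEig j ≤ lamEig i)
    (hA0char : ∀ x : ℝ, (A0 - x • (1 : Matrix (Fin n) (Fin n) ℝ)).det = ∏ i, (lamEig i - x))
    (μ : Fin m → ℝ) (hμmono : ∀ i j, i ≤ j → μ j ≤ μ i) (hμ0 : μ ⟨0, hm⟩ = ρ)
    (hA1char : ∀ x : ℝ, (A1 - x • (1 : Matrix (Fin m) (Fin m) ℝ)).det = ∏ j, (μ j - x)) :
    ∀ lam : ℝ,
      (coronaA n m A0 A1 b - lam • 1).det =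
        (∏ i, (lam ^ 2 - (lamEig i + ρ) * lam + (lamEig i * ρ - m * b ^ 2))) *
          ∏ j ∈ Finset.univ.erase ⟨0, hm⟩, (μ j - lam) ^ n :=
  corona_char_poly_general n m hm A0 A1 ρ b hrow lamEig hA0char μ hμ0 hA1char
end
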